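/- arXiv:1706.03374 — 2 statements merged into one kernel-verified Lean document; each statement's English description precedes it below -/
import Mathlib

section
/- Let π be a D-ordering of Q, i.e., an enumeration q₁, q₂, …, q_{|Q|} of Q such that for each j, writing Q_j = {q_j, q_{j+1}, …, q_{|Q|}}, the slice sum d(Q_j, q_j) = min_{r ∈ Q_j} d(Q_j, r). Then there exists some j such that ρ(Q_j) ≥ ρ_opt / N, where ρ_opt is the maximum density over all nonempty subsets of Q. -/
open Finset

variable {α β : Type*}

noncomputable def mass [DecidableEq α] (E : Finset β) (w : β → ℝ)
    (slices : β → Finset α) (S : Finset α) : ℝ :=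
  ∑ e ∈ E.filter (fun e => slices e ⊆ S), w e

noncomputable def sliceSum [DecidableEq α] (E : Finset β) (w : β → ℝ)
    (slices : β → Finset α) (S : Finset α) (q : α) : ℝ :=
  ∑ e ∈ E.filter (fun e => slices e ⊆ S ∧ q ∈ slices e), w e

noncomputable def density [DecidableEq α] (E : Finset β) (w : β → ℝ)
    (slices : β → Finset α) (S : Finset α) : ℝ :=
  mass E w slices S / S.card

def suffixSet [DecidableEq α] {m : ℕ} (π : Fin m → α) (j : Fin m) : Finset α :=
  (Finset.univ.filter (fun i => j ≤ i)).image π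

def IsDOrdering [DecidableEq α] (E : Finset β) (w : β → ℝ)
    (slices : β → Finset α) {m : ℕ} (π : Fin m → α) : Prop :=
  ∀ j : Fin m, ∀ r ∈ suffixSet π j,
    sliceSum E w slices (suffixSet π j) (π j) ≤ sliceSum E w slices (suffixSet π j) r

noncomputable def rhoOpt [DecidableEq α] (Q : Finset α) (E : Finset β) (w : β → ℝ)
    (slices : β → Finset α) : ℝ :=
  sSup {x | ∃ S, S ⊆ Q ∧ S.Nonempty ∧ x = density E w slices S}

noncomputable def dpi [DecidableEq α] (E : Finset β) (w : β → ℝ)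
    (slices : β → Finset α) {m : ℕ} (π : Fin m → α) (i : Fin m) : ℝ :=
  sliceSum E w slices (suffixSet π i) (π i)

noncomputable def cpi [DecidableEq α] (E : Finset β) (w : β → ℝ)
    (slices : β → Finset α) {m : ℕ} (π : Fin m → α) (i : Fin m) : ℝ :=
  (Finset.univ.filter (fun i' : Fin m => i' ≤ i)).sup' ⟨i, by simp⟩ (dpi E w slices π)

/-!
Let `S` be a densest subset. Every `q ∈ S` has `d(S, q) ≥ ρ_opt`, since `M(S) = M(S \ {q}) + d(S, q)`
and `S \ {q}` is no denser than `S`. Let `Q_j` be the first suffix of the D-ordering containing `S`,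
so that `q_j ∈ S`. For every `r ∈ Q_j`, minimality of `q_j` and monotonicity of `d` give
`d(Q_j, r) ≥ d(Q_j, q_j) ≥ d(S, q_j) ≥ ρ_opt`. Each entry lies in exactly `N` slices, so summing over
`r ∈ Q_j` gives `N · M(Q_j) ≥ |Q_j| · ρ_opt`.
-/

section Tensor

variable [DecidableEq α] (E : Finset β) (w : β → ℝ) (slices : β → Finset α)

theorem sum_sliceSum_eq_mul_mass {N : ℕ} (hcard : ∀ e ∈ E, (slices e).card = N)
    (S : Finset α) : ∑ r ∈ S, sliceSum E w slices S r = N * mass E w slices S := by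
  unfold sliceSum mass
  simp only [sum_filter, mul_sum]
  rw [sum_comm]
  refine sum_congr rfl fun e he => ?_
  by_cases h : slices e ⊆ S
  · simp only [h, true_and, if_true]
    rw [sum_ite_mem, inter_eq_right.mpr h, sum_const, hcard e he, nsmul_eq_mul]
  · simp [h]

variable {E w slices}

theorem sliceSum_mono (hw : ∀ e, 0 ≤ w e) {S T : Finset α} (hST : S ⊆ T) (q : α) :
    sliceSum E w slices S q ≤ sliceSum E w slices T q :=
  sum_le_sum_of_subset_of_nonneg
    (monotone_filter_right _ fun _ _ h => ⟨h.1.trans hST, h.2⟩) fun e _ _ => hw e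

variable (E w slices) in
theorem mass_eq_mass_erase_add_sliceSum (S : Finset α) (q : α) :
    mass E w slices S = mass E w slices (S.erase q) + sliceSum E w slices S q := by
  unfold mass sliceSum
  rw [add_comm, ← sum_filter_add_sum_filter_not (E.filter fun e => slices e ⊆ S)
    (fun e => q ∈ slices e), filter_filter, filter_filter]
  congr 1
  refine sum_congr (filter_congr fun e _ => ?_) fun _ _ => rfl
  simp only [subset_erase]

theorem mass_empty (hne : ∀ e ∈ E, (slices e).Nonempty) : mass E w slices ∅ = 0 :=
  sum_eq_zero fun e he => by
    obtain ⟨he, hsub⟩ := mem_filter.mp he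
    exact absurd (subset_empty.mp hsub) (hne e he).ne_empty

theorem mass_le_mul_card {Q : Finset α} {ρ : ℝ} (hne : ∀ e ∈ E, (slices e).Nonempty)
    (hρ : ∀ T ⊆ Q, T.Nonempty → density E w slices T ≤ ρ) {T : Finset α} (hTQ : T ⊆ Q) :
    mass E w slices T ≤ ρ * T.card := by
  rcases T.eq_empty_or_nonempty with rfl | hT
  · simp [mass_empty hne]
  · have hpos : (0 : ℝ) < T.card := by exact_mod_cast hT.card_pos
    exact (div_le_iff₀ hpos).mp (hρ T hTQ hT)

theorem le_sliceSum_of_density_eq {Q S : Finset α} {ρ : ℝ} (hne : ∀ e ∈ E, (slices e).Nonempty)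
    (hρ : ∀ T ⊆ Q, T.Nonempty → density E w slices T ≤ ρ) (hSQ : S ⊆ Q)
    (hS : density E w slices S = ρ) {q : α} (hq : q ∈ S) :
    ρ ≤ sliceSum E w slices S q := by
  have hpos : (0 : ℝ) < S.card := by exact_mod_cast card_pos.mpr ⟨q, hq⟩
  have hmass : mass E w slices S = ρ * S.card := (div_eq_iff hpos.ne').mp hS
  have herase := mass_le_mul_card hne hρ ((erase_subset q S).trans hSQ)
  rw [card_erase_of_mem hq, Nat.cast_sub (card_pos.mpr ⟨q, hq⟩), Nat.cast_one] at herase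
  linarith [mass_eq_mass_erase_add_sliceSum E w slices S q]

theorem div_le_density_of_le_sliceSum {N : ℕ} (hN : 0 < N)
    (hcard : ∀ e ∈ E, (slices e).card = N) {T : Finset α} (hT : T.Nonempty) {ρ : ℝ}
    (hle : ∀ r ∈ T, ρ ≤ sliceSum E w slices T r) : ρ / N ≤ density E w slices T := by
  have hsum : T.card * ρ ≤ N * mass E w slices T := by
    rw [← sum_sliceSum_eq_mul_mass E w slices hcard T, ← nsmul_eq_mul, ← sum_const]
    exact sum_le_sum hle
  have hNpos : (0 : ℝ) < N := by exact_mod_cast hN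
  have hTpos : (0 : ℝ) < T.card := by exact_mod_cast hT.card_pos
  rw [density, div_le_div_iff₀ hNpos hTpos]
  linarith

end Tensor

section Suffix

variable [DecidableEq α] {m : ℕ} (π : Fin m → α)

theorem mem_suffixSet_self (j : Fin m) : π j ∈ suffixSet π j :=
  mem_image_of_mem π (mem_filter.mpr ⟨mem_univ j, le_rfl⟩)

variable {π}

/-- Witness: the first position of `S` in the ordering. -/
theorem exists_mem_subset_suffixSet {S : Finset α} (hS : S ⊆ univ.image π) (hne : S.Nonempty) :
    ∃ j, π j ∈ S ∧ S ⊆ suffixSet π j := by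
  have hpos : (univ.filter fun i => π i ∈ S).Nonempty := by
    obtain ⟨q, hq⟩ := hne
    obtain ⟨i, -, rfl⟩ := mem_image.mp (hS hq)
    exact ⟨i, mem_filter.mpr ⟨mem_univ i, hq⟩⟩
  refine ⟨_, (mem_filter.mp (min'_mem _ hpos)).2, fun q hq => ?_⟩
  obtain ⟨i, -, rfl⟩ := mem_image.mp (hS hq)
  exact mem_image_of_mem π (mem_filter.mpr ⟨mem_univ i, min'_le _ i (by simpa using hq)⟩)

end Suffix

theorem dOrdering_good_suffix_general [DecidableEq α] (Q : Finset α) (E : Finset β) (w : β → ℝ)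
    (slices : β → Finset α) (N : ℕ) (hN : 1 ≤ N) (hw : ∀ e, 0 ≤ w e)
    (hcard : ∀ e ∈ E, (slices e).card = N)
    {m : ℕ} (π : Fin m → α)
    (himg : Finset.univ.image π = Q)
    (hD : IsDOrdering E w slices π)
    (ρopt : ℝ)
    (hopt₁ : ∃ S, S ⊆ Q ∧ S.Nonempty ∧ density E w slices S = ρopt)
    (hopt₂ : ∀ S ⊆ Q, S.Nonempty → density E w slices S ≤ ρopt) :
    ∃ j : Fin m, ρopt / N ≤ density E w slices (suffixSet π j) := by
  obtain ⟨S, hSQ, hSne, hSdens⟩ := hopt₁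
  have hne : ∀ e ∈ E, (slices e).Nonempty := fun e he => card_pos.mp (hcard e he ▸ hN)
  obtain ⟨j, hjS, hSsub⟩ := exists_mem_subset_suffixSet (himg ▸ hSQ) hSne
  refine ⟨j, div_le_density_of_le_sliceSum hN hcard ⟨π j, mem_suffixSet_self π j⟩
    fun r hr => ?_⟩
  calc ρopt ≤ sliceSum E w slices S (π j) := le_sliceSum_of_density_eq hne hopt₂ hSQ hSdens hjS
    _ ≤ sliceSum E w slices (suffixSet π j) (π j) := sliceSum_mono hw hSsub _
    _ ≤ sliceSum E w slices (suffixSet π j) r := hD j r hr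

theorem dOrdering_good_suffix [DecidableEq α] (Q : Finset α) (E : Finset β) (w : β → ℝ)
    (slices : β → Finset α) (N : ℕ) (hN : 1 ≤ N) (hw : ∀ e, 0 ≤ w e)
    (hcard : ∀ e ∈ E, (slices e).card = N) (hQ : Q.Nonempty)
    {m : ℕ} (hm : m = Q.card) (π : Fin m → α)
    (hinj : Function.Injective π) (himg : Finset.univ.image π = Q)
    (hD : IsDOrdering E w slices π)
    (ρopt : ℝ)
    (hopt₁ : ∃ S, S ⊆ Q ∧ S.Nonempty ∧ density E w slices S = ρopt)
    (hopt₂ : ∀ S ⊆ Q, S.Nonempty → density E w slices S ≤ ρopt) :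
    ∃ j : Fin m, ρopt / N ≤ density E w slices (suffixSet π j) :=
  dOrdering_good_suffix_general Q E w slices N hN hw hcard π himg hD ρopt hopt₁ hopt₂
end

section
/- Let π be a D-ordering of Q with suffix sets Q_{π,q} (slices at position ≥ that of q), slice sums d_π(q) = d(Q_{π,q}, q), and cumulative maxima c_π(q) = max{ d_π(r) : r positioned before or equal to q in π }. Let S* be a densest subset (ρ(S*) = ρ_opt). Then for every entry e with slices e ⊆ S*, and every slice q ∈ slices e, we have c_π(q) ≥ ρ_opt. -/
open Finset

variable {α β : Type*}

lemma mass_split [DecidableEq α] (E : Finset β) (w : β → ℝ)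
    (slices : β → Finset α) (S : Finset α) (q : α) :
    mass E w slices S
      = mass E w slices (S.erase q) + sliceSum E w slices S q := by
  unfold mass sliceSum
  rw [← Finset.sum_filter_add_sum_filter_not (E.filter (fun e => slices e ⊆ S))
    (fun e => q ∈ slices e), Finset.filter_filter, Finset.filter_filter, add_comm]
  congr 1
  refine Finset.sum_congr ?_ (fun _ _ => rfl)
  apply Finset.filter_congr
  intro e _
  simp [Finset.subset_erase]

lemma sliceSum_ge_density [DecidableEq α] (Q : Finset α) (E : Finset β) (w : β → ℝ)
    (slices : β → Finset α) (N : ℕ) (hw : ∀ e, 0 ≤ w e)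
    (hcard : ∀ e ∈ E, (slices e).card = N) (hN : 1 ≤ N)
    (Sstar : Finset α) (hsub : Sstar ⊆ Q) (hne : Sstar.Nonempty)
    (hmax : ∀ S ⊆ Q, S.Nonempty → density E w slices S ≤ density E w slices Sstar)
    (r : α) (hr : r ∈ Sstar) :
    density E w slices Sstar ≤ sliceSum E w slices Sstar r := by
  have hc : (0:ℝ) < (Sstar.card : ℝ) := by
    exact_mod_cast Finset.card_pos.mpr hne
  have hmassS : mass E w slices Sstar = density E w slices Sstar * Sstar.card := by
    unfold density; field_simp
  have hcE : (Sstar.erase r).card = Sstar.card - 1 := Finset.card_erase_of_mem hr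
  have hkey : mass E w slices (Sstar.erase r)
      ≤ density E w slices Sstar * ((Sstar.card : ℝ) - 1) := by
    rcases (Sstar.erase r).eq_empty_or_nonempty with hE | hE
    · have hcard1 : Sstar.card = 1 := by
        have := Finset.card_erase_of_mem hr
        rw [hE] at this
        simp at this
        have h1 : 1 ≤ Sstar.card := Finset.card_pos.mpr hne
        omega
      have : mass E w slices (Sstar.erase r) = 0 := by
        rw [hE]
        unfold mass
        rw [Finset.filter_false_of_mem, Finset.sum_empty]
        intro e heE hsub
        have h0 : slices e = ∅ := Finset.subset_empty.mp hsub
        have := hcard e heE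
        rw [h0] at this
        simp at this
        have h1 : 1 ≤ Sstar.card := Finset.card_pos.mpr hne
        omega
      rw [this, hcard1]
      simp
    · have h1 : density E w slices (Sstar.erase r) ≤ density E w slices Sstar :=
        hmax _ ((Finset.erase_subset _ _).trans hsub) hE
      have hc' : (0:ℝ) < ((Sstar.erase r).card : ℝ) := by
        exact_mod_cast Finset.card_pos.mpr hE
      have hm2 : density E w slices (Sstar.erase r) * ((Sstar.erase r).card : ℝ)
          = mass E w slices (Sstar.erase r) := by
        unfold density; exact div_mul_cancel₀ _ hc'.ne'
      rw [← hm2, hcE]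
      have hge1 : 1 ≤ Sstar.card := Finset.card_pos.mpr hne
      have : ((Sstar.card - 1 : ℕ) : ℝ) = (Sstar.card : ℝ) - 1 := by
        push_cast [hge1]; ring
      rw [this]
      apply mul_le_mul_of_nonneg_right h1
      have : 1 ≤ (Sstar.card:ℝ) := by exact_mod_cast hge1
      linarith
  have hsplit := mass_split E w slices Sstar r
  have := hmassS
  nlinarith [hsplit, hkey, hmassS]


theorem cpi_ge_rhoOpt [DecidableEq α] (Q : Finset α) (E : Finset β) (w : β → ℝ)
    (slices : β → Finset α) (N : ℕ) (hw : ∀ e, 0 ≤ w e)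
    (hcard : ∀ e ∈ E, (slices e).card = N)
    {m : ℕ} (hm : m = Q.card) (π : Fin m → α)
    (hinj : Function.Injective π) (himg : Finset.univ.image π = Q)
    (hD : IsDOrdering E w slices π)
    (Sstar : Finset α) (hsub : Sstar ⊆ Q) (hne : Sstar.Nonempty)
    (hmax : ∀ S ⊆ Q, S.Nonempty → density E w slices S ≤ density E w slices Sstar)
    (e : β) (he : e ∈ E) (hes : slices e ⊆ Sstar)
    (q : α) (hq : q ∈ slices e) (i : Fin m) (hπ : π i = q) :
    density E w slices Sstar ≤ cpi E w slices π i := by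
  have hN : 1 ≤ N := by
    have := hcard e he
    have hpos : 0 < (slices e).card := Finset.card_pos.mpr ⟨q, hq⟩
    omega
  set T : Finset (Fin m) := Finset.univ.filter (fun i' => π i' ∈ Sstar) with hT
  have hiT : i ∈ T := by
    simp only [hT, Finset.mem_filter, Finset.mem_univ, true_and]
    rw [hπ]; exact hes hq
  have hTne : T.Nonempty := ⟨i, hiT⟩
  set j := T.min' hTne with hj
  have hji : j ≤ i := Finset.min'_le T i hiT
  have hπjS : π j ∈ Sstar := by
    have := Finset.min'_mem T hTne
    simpa [hT, Finset.mem_filter] using this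
  have hSsuf : Sstar ⊆ suffixSet π j := by
    intro r hr
    have hrQ : r ∈ Q := hsub hr
    rw [← himg] at hrQ
    obtain ⟨k, -, hk⟩ := Finset.mem_image.mp hrQ
    have hkT : k ∈ T := by
      simp only [hT, Finset.mem_filter, Finset.mem_univ, true_and, hk]
      exact hr
    have hjk : j ≤ k := Finset.min'_le T k hkT
    exact Finset.mem_image.mpr ⟨k, Finset.mem_filter.mpr ⟨Finset.mem_univ _, hjk⟩, hk⟩
  have h1 : density E w slices Sstar ≤ sliceSum E w slices Sstar (π j) :=
    sliceSum_ge_density Q E w slices N hw hcard hN Sstar hsub hne hmax (π j) hπjS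
  have h2 : sliceSum E w slices Sstar (π j) ≤ dpi E w slices π j := by
    unfold dpi sliceSum
    apply Finset.sum_le_sum_of_subset_of_nonneg
    · intro a ha
      simp only [Finset.mem_filter] at ha ⊢
      exact ⟨ha.1, ha.2.1.trans hSsuf, ha.2.2⟩
    · intro a _ _; exact hw a
  have h3 : dpi E w slices π j ≤ cpi E w slices π i := by
    apply Finset.le_sup'
    exact Finset.mem_filter.mpr ⟨Finset.mem_univ _, hji⟩
  linarith
end
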